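/- arXiv:2110.01694 — 2 statements merged into one kernel-verified Lean document; each statement's English description precedes it below -/
import Mathlib

section
/- Let 𝔖 be a directed category with the weak Ramsey property. Then an 𝔖-arrow α : a → a' is a Ramsey arrow if and only if it is amalgamable. Consequently, 𝔖 has the weak amalgamation property, and 𝔖 has the Ramsey property if and only if it has the amalgamation property. -/
open CategoryTheory

universe v u

/-- `𝔖(α, b)`: the set of arrows `a ⟶ b` of the form `f ∘ α` with `f : a' ⟶ b`. -/
def HomThrough {C : Type u} [Category.{v} C] {a a' : C} (α : a ⟶ a') (b : C) :
    Set (a ⟶ b) :=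
  {h | ∃ f : a' ⟶ b, h = α ≫ f}

/-- `α : a ⟶ a'` is a Ramsey arrow. -/
def IsRamseyArrow {C : Type u} [Category.{v} C] {a a' : C} (α : a ⟶ a') : Prop :=
  ∀ (b : C) (k : ℕ) (F : Finset (a ⟶ b)), (F : Set (a ⟶ b)) ⊆ HomThrough α b →
    ∃ v : C, ∀ φ : HomThrough α v → Fin k,
      ∃ e : b ⟶ v, ∀ f ∈ F, ∀ g ∈ F,
        ∀ (hf : f ≫ e ∈ HomThrough α v) (hg : g ≫ e ∈ HomThrough α v),
          φ ⟨f ≫ e, hf⟩ = φ ⟨g ≫ e, hg⟩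

/-- An arrow `e : z ⟶ z'` is amalgamable if every two arrows out of `z'` can be
equalized over `e` by further arrows. -/
def Amalgamable {C : Type u} [Category.{v} C] {z z' : C} (e : z ⟶ z') : Prop :=
  ∀ ⦃x y : C⦄ (f : z' ⟶ x) (g : z' ⟶ y),
    ∃ (w : C) (f' : x ⟶ w) (g' : y ⟶ w), e ≫ f ≫ f' = e ≫ g ≫ g'


/-- A category is directed if every two objects map into a common object. -/
def DirectedCat (C : Type u) [Category.{v} C] : Prop :=
  ∀ x y : C, ∃ z : C, Nonempty (x ⟶ z) ∧ Nonempty (y ⟶ z)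

/-- The weak Ramsey property: every object is the domain of a Ramsey arrow. -/
def WeakRamsey (C : Type u) [Category.{v} C] : Prop :=
  ∀ a : C, ∃ (a' : C) (α : a ⟶ a'), IsRamseyArrow α

/-- The Ramsey property: every identity arrow is a Ramsey arrow. -/
def RamseyProp (C : Type u) [Category.{v} C] : Prop :=
  ∀ a : C, IsRamseyArrow (𝟙 a)

/-- The weak amalgamation property. -/
def WeakAmalg (C : Type u) [Category.{v} C] : Prop :=
  ∀ a : C, ∃ (a' : C) (α : a ⟶ a'), Amalgamable α

/-- The amalgamation property: every identity arrow is amalgamable. -/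
def AmalgProp (C : Type u) [Category.{v} C] : Prop :=
  ∀ a : C, Amalgamable (𝟙 a)

-- Ramsey ⇒ amalgamable
lemma amalgamable_of_ramsey {C : Type u} [Category.{v} C] (hdir : DirectedCat C)
    {a a' : C} (α : a ⟶ a') (hα : IsRamseyArrow α) : Amalgamable α := by
  classical
  intro x y f g
  obtain ⟨z, ⟨u⟩, ⟨w⟩⟩ := hdir x y
  set f₁ : a ⟶ z := α ≫ (f ≫ u) with hf₁
  set f₂ : a ⟶ z := α ≫ (g ≫ w) with hf₂
  have hF : (({f₁, f₂} : Finset (a ⟶ z)) : Set (a ⟶ z)) ⊆ HomThrough α z := by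
    intro h hh
    simp only [Finset.coe_insert, Finset.coe_singleton, Set.mem_insert_iff,
      Set.mem_singleton_iff] at hh
    rcases hh with rfl | rfl
    · exact ⟨f ≫ u, rfl⟩
    · exact ⟨g ≫ w, rfl⟩
  obtain ⟨v, hv⟩ := hα z 2 {f₁, f₂} hF
  let φ : HomThrough α v → Fin 2 := fun h => if ∃ e', h.1 = f₁ ≫ e' then 0 else 1
  obtain ⟨e, he⟩ := hv φ
  have h1 : f₁ ≫ e ∈ HomThrough α v := ⟨(f ≫ u) ≫ e, by simp [hf₁]⟩
  have h2 : f₂ ≫ e ∈ HomThrough α v := ⟨(g ≫ w) ≫ e, by simp [hf₂]⟩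
  have key := he f₁ (by simp) f₂ (by simp) h1 h2
  have hφ1 : φ ⟨f₁ ≫ e, h1⟩ = 0 := if_pos ⟨e, rfl⟩
  have hφ2 : φ ⟨f₂ ≫ e, h2⟩ = 0 := by rw [← key, hφ1]
  have hex : ∃ e', f₂ ≫ e = f₁ ≫ e' := by
    by_contra hc
    simp only [φ, if_neg hc] at hφ2
    exact absurd hφ2 (by decide)
  obtain ⟨e', he'⟩ := hex
  refine ⟨v, u ≫ e', w ≫ e, ?_⟩
  calc α ≫ f ≫ u ≫ e' = f₁ ≫ e' := by simp [hf₁]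
    _ = f₂ ≫ e := he'.symm
    _ = α ≫ g ≫ w ≫ e := by simp [hf₂]

-- precomposition preserves Ramsey
lemma isRamseyArrow_comp {C : Type u} [Category.{v} C] {a a' a'' : C}
    (α : a ⟶ a') (β : a' ⟶ a'') (hβ : IsRamseyArrow β) : IsRamseyArrow (α ≫ β) := by
  classical
  intro b k F hF
  have hmem : ∀ f ∈ F, ∃ g : a'' ⟶ b, f = (α ≫ β) ≫ g := fun f hf => hF hf
  let gf : ∀ f ∈ F, (a'' ⟶ b) := fun f hf => Classical.choose (hmem f hf)
  have hgf : ∀ f (hf : f ∈ F), f = (α ≫ β) ≫ gf f hf :=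
    fun f hf => Classical.choose_spec (hmem f hf)
  set G : Finset (a' ⟶ b) := F.attach.image (fun f => β ≫ gf f.1 f.2) with hG
  have hGsub : (G : Set (a' ⟶ b)) ⊆ HomThrough β b := by
    intro h hh
    simp only [hG, Finset.coe_image, Set.mem_image] at hh
    obtain ⟨f, _, rfl⟩ := hh
    exact ⟨_, rfl⟩
  obtain ⟨v, hv⟩ := hβ b k G hGsub
  refine ⟨v, fun φ => ?_⟩
  have sub : ∀ h : a' ⟶ v, h ∈ HomThrough β v → α ≫ h ∈ HomThrough (α ≫ β) v := by
    rintro h ⟨t, rfl⟩; exact ⟨t, by simp⟩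
  let φ' : HomThrough β v → Fin k := fun h => φ ⟨α ≫ h.1, sub h.1 h.2⟩
  obtain ⟨e, he⟩ := hv φ'
  refine ⟨e, ?_⟩
  intro f hf g hg hfe hge
  have hfG : β ≫ gf f hf ∈ G :=
    Finset.mem_image_of_mem _ (Finset.mem_attach _ ⟨f, hf⟩)
  have hgG : β ≫ gf g hg ∈ G :=
    Finset.mem_image_of_mem _ (Finset.mem_attach _ ⟨g, hg⟩)
  have m1 : (β ≫ gf f hf) ≫ e ∈ HomThrough β v := ⟨gf f hf ≫ e, by simp⟩
  have m2 : (β ≫ gf g hg) ≫ e ∈ HomThrough β v := ⟨gf g hg ≫ e, by simp⟩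
  have key := he _ hfG _ hgG m1 m2
  have q1 : f ≫ e = α ≫ ((β ≫ gf f hf) ≫ e) := by
    conv_lhs => rw [hgf f hf]
    simp
  have q2 : g ≫ e = α ≫ ((β ≫ gf g hg) ≫ e) := by
    conv_lhs => rw [hgf g hg]
    simp
  have e1 : (⟨f ≫ e, hfe⟩ : HomThrough (α ≫ β) v)
      = ⟨α ≫ ((β ≫ gf f hf) ≫ e), sub _ m1⟩ := Subtype.ext q1
  have e2 : (⟨g ≫ e, hge⟩ : HomThrough (α ≫ β) v)
      = ⟨α ≫ ((β ≫ gf g hg) ≫ e), sub _ m2⟩ := Subtype.ext q2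
  rw [e1, e2]
  exact key

-- amalgamable + factors a Ramsey arrow ⇒ Ramsey
lemma ramsey_of_amalg_factor {C : Type u} [Category.{v} C] {a a' d : C}
    (α : a ⟶ a') (γ : a' ⟶ d) (hα : Amalgamable α)
    (hδ : IsRamseyArrow (α ≫ γ)) : IsRamseyArrow α := by
  classical
  intro b k F hF
  -- merge F into HomThrough (α ≫ γ)
  have merge : ∀ (S : Finset (a ⟶ b)), (S : Set (a ⟶ b)) ⊆ HomThrough α b →
      ∃ (b' : C) (h : b ⟶ b'), ∀ f ∈ S, f ≫ h ∈ HomThrough (α ≫ γ) b' := by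
    intro S
    induction S using Finset.induction with
    | empty => exact fun _ => ⟨b, 𝟙 b, by simp⟩
    | @insert f₀ S hf₀ ih =>
      intro hsub
      obtain ⟨b', h, hh⟩ := ih (fun f hf => hsub (by simp [hf]))
      obtain ⟨g₀, hg₀⟩ := hsub (Finset.mem_insert_self f₀ S : f₀ ∈ insert f₀ S)
      obtain ⟨w, u, vv, huv⟩ := hα (g₀ ≫ h) γ
      refine ⟨w, h ≫ u, ?_⟩
      intro f hf
      rcases Finset.mem_insert.mp hf with rfl | hfS
      · refine ⟨vv, ?_⟩
        rw [hg₀]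
        simpa using huv
      · obtain ⟨t, ht⟩ := hh f hfS
        exact ⟨t ≫ u, by rw [← Category.assoc, ht]; simp⟩
  obtain ⟨b', h, hh⟩ := merge F hF
  set F' : Finset (a ⟶ b') := F.image (· ≫ h) with hF'
  have hF'sub : (F' : Set (a ⟶ b')) ⊆ HomThrough (α ≫ γ) b' := by
    intro x hx
    simp only [hF', Finset.coe_image, Set.mem_image, Finset.mem_coe] at hx
    obtain ⟨f, hf, rfl⟩ := hx
    exact hh f hf
  obtain ⟨v, hv⟩ := hδ b' k F' hF'sub
  refine ⟨v, fun φ => ?_⟩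
  have sub : ∀ x : a ⟶ v, x ∈ HomThrough (α ≫ γ) v → x ∈ HomThrough α v := by
    rintro x ⟨t, rfl⟩; exact ⟨γ ≫ t, by simp⟩
  let φ' : HomThrough (α ≫ γ) v → Fin k := fun x => φ ⟨x.1, sub x.1 x.2⟩
  obtain ⟨e', he'⟩ := hv φ'
  refine ⟨h ≫ e', ?_⟩
  intro f hf g hg hfe hge
  have hfF' : f ≫ h ∈ F' := Finset.mem_image_of_mem _ hf
  have hgF' : g ≫ h ∈ F' := Finset.mem_image_of_mem _ hg
  have m1 : (f ≫ h) ≫ e' ∈ HomThrough (α ≫ γ) v := by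
    obtain ⟨t, ht⟩ := hh f hf
    exact ⟨t ≫ e', by rw [ht]; simp⟩
  have m2 : (g ≫ h) ≫ e' ∈ HomThrough (α ≫ γ) v := by
    obtain ⟨t, ht⟩ := hh g hg
    exact ⟨t ≫ e', by rw [ht]; simp⟩
  have key := he' _ hfF' _ hgF' m1 m2
  have e1 : (⟨f ≫ h ≫ e', hfe⟩ : HomThrough α v) = ⟨(f ≫ h) ≫ e', sub _ m1⟩ :=
    Subtype.ext (by simp)
  have e2 : (⟨g ≫ h ≫ e', hge⟩ : HomThrough α v) = ⟨(g ≫ h) ≫ e', sub _ m2⟩ :=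
    Subtype.ext (by simp)
  rw [e1, e2]
  exact key

/-- In a directed category with the weak Ramsey property, an arrow is Ramsey iff it is
amalgamable; hence the category has the weak amalgamation property, and it has the
Ramsey property iff it has the amalgamation property. -/
theorem ramsey_iff_amalgamable_of_weakRamsey {C : Type u} [Category.{v} C]
    (hdir : DirectedCat C) (hwr : WeakRamsey C) :
    (∀ {a a' : C} (α : a ⟶ a'), IsRamseyArrow α ↔ Amalgamable α) ∧
    WeakAmalg C ∧ (RamseyProp C ↔ AmalgProp C) := by
  have main : ∀ {a a' : C} (α : a ⟶ a'), IsRamseyArrow α ↔ Amalgamable α := by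
    intro a a' α
    constructor
    · exact amalgamable_of_ramsey hdir α
    · intro hα
      obtain ⟨a'', β, hβ⟩ := hwr a'
      exact ramsey_of_amalg_factor α β hα (isRamseyArrow_comp α β hβ)
  refine ⟨main, ?_, ?_⟩
  · intro a
    obtain ⟨a', α, hα⟩ := hwr a
    exact ⟨a', α, (main α).mp hα⟩
  · exact ⟨fun h a => (main (𝟙 a)).mp (h a), fun h a => (main (𝟙 a)).mpr (h a)⟩
end

section
/- Let M be a monoid all of whose elements are idempotent (x·x = x for all x ∈ M). Then for α ∈ M the following are equivalent: (i) α is a Ramsey element; (ii) α satisfies the left equalization condition (LE); (iii) α is amalgamable, i.e. for all f, g ∈ M there exist f', g' ∈ M with f'·f·α = g'·g·α. -/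
/-- `Mα`: the set of left multiples of `α`, i.e. the hom-set `𝔖(α, ·)` when the monoid
`M` is viewed as a one-object category. -/
def leftMultiples {M : Type*} [Monoid M] (α : M) : Set M :=
  {x | ∃ y : M, x = y * α}

/-- `α ∈ M` is a Ramsey element: for every `k ∈ ℕ`, every finite `F ⊆ Mα` and every
coloring `φ : Mα → Fin k` there is `e ∈ M` such that `φ` is constant on `eF`. -/
def IsRamseyElement {M : Type*} [Monoid M] (α : M) : Prop :=
  ∀ (k : ℕ) (F : Finset M), (F : Set M) ⊆ leftMultiples α →
    ∀ φ : leftMultiples α → Fin k,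
      ∃ e : M, ∀ x ∈ F, ∀ y ∈ F,
        ∀ (hx : e * x ∈ leftMultiples α) (hy : e * y ∈ leftMultiples α),
          φ ⟨e * x, hx⟩ = φ ⟨e * y, hy⟩

/-- The left equalization condition (LE): every two elements of `Mα` can be equalized
by a common left multiplier. -/
def LeftEqualization {M : Type*} [Monoid M] (α : M) : Prop :=
  ∀ x ∈ leftMultiples α, ∀ y ∈ leftMultiples α, ∃ e : M, e * x = e * y

lemma leftMultiples_mul_mem {M : Type*} [Monoid M] {α x : M} (e : M)
    (hx : x ∈ leftMultiples α) : e * x ∈ leftMultiples α := by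
  obtain ⟨y, rfl⟩ := hx
  exact ⟨e * y, (mul_assoc e y α).symm⟩

/-- Equalize a whole finite subset of `Mα`. -/
lemma equalize_finset {M : Type*} [Monoid M] {α : M} (hLE : LeftEqualization α)
    (F : Finset M) (hF : (F : Set M) ⊆ leftMultiples α) :
    ∃ e : M, ∀ x ∈ F, ∀ y ∈ F, e * x = e * y := by
  classical
  induction F using Finset.induction_on with
  | empty => exact ⟨1, by simp⟩
  | @insert a F ha ih =>
    have hF' : (F : Set M) ⊆ leftMultiples α := by
      intro z hz; exact hF (by simp [hz])
    obtain ⟨e, he⟩ := ih hF'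
    rcases F.eq_empty_or_nonempty with rfl | ⟨b, hb⟩
    · exact ⟨1, by simp⟩
    · have haα : a ∈ leftMultiples α := hF (by simp)
      have hbα : b ∈ leftMultiples α := hF (by simp [hb])
      obtain ⟨e', he'⟩ := hLE (e * a) (leftMultiples_mul_mem e haα)
        (e * b) (leftMultiples_mul_mem e hbα)
      refine ⟨e' * e, ?_⟩
      have key : ∀ x ∈ insert a F, e' * e * x = e' * e * b := by
        intro x hx
        rcases Finset.mem_insert.mp hx with rfl | hxF
        · rw [mul_assoc, mul_assoc, he']
        · rw [mul_assoc, mul_assoc, he x hxF b hb]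
      intro x hx y hy
      rw [key x hx, key y hy]

/-- In a monoid of idempotents, an element is Ramsey iff it satisfies the left
equalization condition (LE) iff it is amalgamable. -/
theorem idempotent_monoid_ramsey_iff_LE_iff_amalgamable {M : Type*} [Monoid M]
    (hidem : ∀ x : M, x * x = x) (α : M) :
    (IsRamseyElement α ↔ LeftEqualization α) ∧
    (LeftEqualization α ↔
      ∀ f g : M, ∃ f' g' : M, f' * f * α = g' * g * α) := by
  classical
  constructor
  · constructor
    · -- Ramsey → LE
      intro hR x hx y hy
      set φ : leftMultiples α → Fin 2 :=
        fun z => if ∃ w : M, (z : M) = w * x then 0 else 1 with hφ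
      have hFsub : (({x, y} : Finset M) : Set M) ⊆ leftMultiples α := by
        intro z hz
        simp only [Finset.coe_insert, Finset.coe_singleton, Set.mem_insert_iff,
          Set.mem_singleton_iff] at hz
        rcases hz with rfl | rfl <;> assumption
      obtain ⟨e, he⟩ := hR 2 {x, y} hFsub φ
      have hex : e * x ∈ leftMultiples α := leftMultiples_mul_mem e hx
      have hey : e * y ∈ leftMultiples α := leftMultiples_mul_mem e hy
      have := he x (by simp) y (by simp) hex hey
      have h0 : φ ⟨e * x, hex⟩ = 0 := by
        have hw : ∃ w : M, e * x = w * x := ⟨e, rfl⟩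
        simp only [hφ, if_pos hw]
      rw [h0] at this
      have : ∃ w : M, e * y = w * x := by
        by_contra hc
        simp only [hφ, if_neg hc] at this
        exact one_ne_zero this.symm
      obtain ⟨w, hw⟩ := this
      refine ⟨e * y, ?_⟩
      calc e * y * x = w * x * x := by rw [hw]
        _ = w * (x * x) := mul_assoc _ _ _
        _ = w * x := by rw [hidem]
        _ = e * y := hw.symm
        _ = e * (y * y) := by rw [hidem]
        _ = e * y * y := (mul_assoc _ _ _).symm
    · -- LE → Ramsey
      intro hLE k F hF φ
      obtain ⟨e, he⟩ := equalize_finset hLE F hF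
      refine ⟨e, fun x hx y hy hexα heyα => ?_⟩
      exact congrArg φ (Subtype.ext (he x hx y hy))
  · constructor
    · intro hLE f g
      obtain ⟨e, he⟩ := hLE (f * α) ⟨f, rfl⟩ (g * α) ⟨g, rfl⟩
      exact ⟨e, e, by rw [mul_assoc, he, mul_assoc]⟩
    · intro h x hx y hy
      obtain ⟨f, rfl⟩ := hx
      obtain ⟨g, rfl⟩ := hy
      obtain ⟨f', g', hfg⟩ := h f g
      refine ⟨f' * (f * α), ?_⟩
      have h1 : f' * (f * α) * (f * α) = f' * (f * α) := by
        rw [mul_assoc, hidem]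
      have h2 : f' * (f * α) = g' * (g * α) := by
        rw [← mul_assoc, hfg, mul_assoc]
      have h3 : f' * (f * α) * (g * α) = f' * (f * α) := by
        rw [h2, mul_assoc, hidem]
      rw [h1, h3]
end
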